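/- Let k, t be integers with 2 ≤ t ≤ k−1 and let S be a (k; k−t, k−t+1)-SPID in a finite-dimensional vector space V over a field with |S| = n ≥ 3 and dim V ≥ n·t + (k−t), such that S is not a (k−t)-junta. If dim⟨S⟩ = k + (n−1)(t−1) + 1 and S contains no (k−t)-sunflower of maximal dimension with at least three petals, then S is one of the configurations of Class II, Class III, or Class IV (as described in the context). -/
import Mathlib


open Module

variable {F : Type*} [Field F] {V : Type*} [AddCommGroup V] [Module F V]
  [FiniteDimensional F V]

/-- The subspace `⟨π_1, …, π_j⟩` (1-based), i.e. the span of the `π i` with `(i : ℕ) < j`. -/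
def pspan {n : ℕ} (π : Fin n → Submodule F V) (j : ℕ) : Submodule F V :=
  ⨆ i : Fin n, ⨆ _ : (i : ℕ) < j, π i

/-- The 1-based difference sequence `δ_j = dim⟨π_1,…,π_j⟩ - dim⟨π_1,…,π_{j-1}⟩`. -/
noncomputable def delta {n : ℕ} (π : Fin n → Submodule F V) (j : ℕ) : ℕ :=
  finrank F ↥(pspan π j) - finrank F ↥(pspan π (j - 1))

/-- A `(k; ℓ_1, …, ℓ_v)`-SPID, where `L` is the set of prescribed intersection dimensions:
a family of pairwise distinct `k`-dimensional subspaces, any two distinct members meeting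
in a dimension belonging to `L`, and every value of `L` being attained. -/
def IsSPID {n : ℕ} (k : ℕ) (L : Set ℕ) (π : Fin n → Submodule F V) : Prop :=
  Function.Injective π ∧
  (∀ i, finrank F ↥(π i) = k) ∧
  (∀ i j, i ≠ j → finrank F ↥(π i ⊓ π j) ∈ L) ∧
  ∀ ℓ ∈ L, ∃ i j, i ≠ j ∧ finrank F ↥(π i ⊓ π j) = ℓ

/-- An `ℓ`-junta: all members pass through a common `ℓ`-dimensional subspace. -/
def IsJunta {n : ℕ} (ℓ : ℕ) (π : Fin n → Submodule F V) : Prop :=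
  ∃ C : Submodule F V, finrank F ↥C = ℓ ∧ ∀ i, C ≤ π i

/-- `S` contains an `ℓ`-sunflower of maximal dimension with `p` petals (all petals being
`k`-dimensional): `p` members of `S` pairwise meeting exactly in a common `ℓ`-dimensional
center and spanning a subspace of dimension `ℓ + p(k - ℓ)`. -/
def HasMaxSunflower (k ℓ p : ℕ) (S : Set (Submodule F V)) : Prop :=
  ∃ A : Finset (Submodule F V), ↑A ⊆ S ∧ A.card = p ∧
    ∃ C : Submodule F V, finrank F ↥C = ℓ ∧
      (∀ W ∈ A, ∀ W' ∈ A, W ≠ W' → W ⊓ W' = C) ∧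
      finrank F ↥(A.sup id) = ℓ + p * (k - ℓ)

/-- Class II configurations. -/
def IsClassII (k t n : ℕ) (S : Set (Submodule F V)) : Prop :=
  ∃ (W W1 W2 X1 X2 : Submodule F V) (M : Fin (n - 2) → Submodule F V),
    finrank F ↥W = k - t + 1 ∧ W1 ≤ W ∧ W2 ≤ W ∧
    finrank F ↥W1 = k - t ∧ finrank F ↥W2 = k - t ∧
    finrank F ↥X1 = t ∧ finrank F ↥X2 = t ∧
    finrank F ↥(X1 ⊔ X2) = 2 * t - 1 ∧
    (∀ j, finrank F ↥(M j) = t - 1) ∧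
    finrank F ↥(W ⊔ (X1 ⊔ X2) ⊔ ⨆ j, M j) =
      (k - t + 1) + (2 * t - 1) + (n - 2) * (t - 1) ∧
    S = {W1 ⊔ X1, W2 ⊔ X2} ∪ Set.range fun j => W ⊔ M j

/-- Class III configurations, with `s` the number of classes of the partition
(the partition of the last `n-2` members being encoded by the fibers of the surjection
`c`). -/
def IsClassIII (k t n s : ℕ) (S : Set (Submodule F V)) : Prop :=
  ∃ (V' X1 X2 W W0 : Submodule F V) (Wf : Fin s → Submodule F V)
    (M : Fin (n - 2) → Submodule F V) (c : Fin (n - 2) → Fin s),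
    finrank F ↥V' = k - t + 2 ∧ finrank F ↥X1 = t ∧ finrank F ↥X2 = t - 1 ∧
    finrank F ↥(X1 ⊓ X2) = 1 ∧ (∀ j, finrank F ↥(M j) = t - 1) ∧
    finrank F ↥(V' ⊔ (X1 ⊔ X2) ⊔ ⨆ j, M j) =
      (k - t + 2) + (2 * t - 2) + (n - 2) * (t - 1) ∧
    W ≤ V' ∧ finrank F ↥W = k - t ∧
    W0 ≤ V' ∧ finrank F ↥W0 = k - t + 1 ∧
    (∀ h, Wf h ≤ V' ∧ finrank F ↥(Wf h) = k - t + 1) ∧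
    Function.Injective Wf ∧ (∀ h, W0 ≠ Wf h) ∧
    (∀ h, W ≤ Wf h) ∧ ¬ W ≤ W0 ∧
    Function.Surjective c ∧
    S = {W ⊔ X1, W0 ⊔ X2} ∪ Set.range fun j => Wf (c j) ⊔ M j

/-- Class IV configurations, with `s` the number of classes of the partition
(the partition of the last `n-2` members being encoded by the fibers of the surjection
`c`; the `(t-1)`-spaces `M_1, …, M_n` are `M 0, …, M (n-1)`). -/
def IsClassIV (k t n s : ℕ) (S : Set (Submodule F V)) : Prop :=
  ∃ (V' V0 W0 : Submodule F V) (Wf : Fin s → Submodule F V)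
    (M : ℕ → Submodule F V) (c : Fin (n - 2) → Fin s),
    finrank F ↥V' = k - t + 2 ∧ (∀ i, i < n → finrank F ↥(M i) = t - 1) ∧
    finrank F ↥(V' ⊔ ⨆ i ∈ Finset.range n, M i) = (k - t + 2) + n * (t - 1) ∧
    V0 ≤ V' ∧ finrank F ↥V0 = k - t + 1 ∧
    W0 ≤ V' ∧ finrank F ↥W0 = k - t + 1 ∧
    (∀ h, Wf h ≤ V' ∧ finrank F ↥(Wf h) = k - t + 1) ∧
    Function.Injective Wf ∧
    (¬ ∃ C : Submodule F V,
        finrank F ↥C = k - t ∧ C ≤ V0 ∧ C ≤ W0 ∧ ∀ h, C ≤ Wf h) ∧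
    Function.Surjective c ∧
    S = {V0 ⊔ M 0, W0 ⊔ M 1} ∪
        Set.range fun j : Fin (n - 2) => Wf (c j) ⊔ M ((j : ℕ) + 2)



section AuxLemmas

set_option linter.unusedSectionVars false

/-- complement of `W` inside `P`. -/
lemma exists_compl_le {P W : Submodule F V} (h : W ≤ P) :
    ∃ M, M ≤ P ∧ W ⊓ M = ⊥ ∧ W ⊔ M = P ∧
      finrank F ↥W + finrank F ↥M = finrank F ↥P := by
  obtain ⟨Q, hQ⟩ := Submodule.exists_isCompl (W.comap P.subtype)
  refine ⟨Q.map P.subtype, Submodule.map_subtype_le P Q, ?_, ?_, ?_⟩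
  · have : W = (W.comap P.subtype).map P.subtype := by
      rw [Submodule.map_comap_subtype, inf_eq_right.mpr h]
    rw [this, ← Submodule.map_inf _ (Submodule.injective_subtype P), hQ.inf_eq_bot,
      Submodule.map_bot]
  · have : W = (W.comap P.subtype).map P.subtype := by
      rw [Submodule.map_comap_subtype, inf_eq_right.mpr h]
    rw [this, ← Submodule.map_sup, hQ.sup_eq_top, Submodule.map_top, Submodule.range_subtype]
  · have h1 := Submodule.finrank_sup_add_finrank_inf_eq W (Q.map P.subtype)
    have : W = (W.comap P.subtype).map P.subtype := by
      rw [Submodule.map_comap_subtype, inf_eq_right.mpr h]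
    rw [this, ← Submodule.map_inf _ (Submodule.injective_subtype P), hQ.inf_eq_bot,
      Submodule.map_bot, ← Submodule.map_sup, hQ.sup_eq_top, Submodule.map_top,
      Submodule.range_subtype, ← this] at h1
    simpa using h1.symm

/-- complement of `U` inside `P` containing a given `L` with `L ⊓ U = ⊥`. -/
lemma exists_compl_le_containing {P U L : Submodule F V} (hU : U ≤ P) (hL : L ≤ P)
    (hLU : L ⊓ U = ⊥) :
    ∃ X, L ≤ X ∧ X ≤ P ∧ U ⊓ X = ⊥ ∧ U ⊔ X = P ∧
      finrank F ↥U + finrank F ↥X = finrank F ↥P := by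
  obtain ⟨Y, hYP, hYi, hYs, hYr⟩ := exists_compl_le (P := P) (W := U ⊔ L) (sup_le hU hL)
  refine ⟨L ⊔ Y, le_sup_left, sup_le hL hYP, ?_, ?_, ?_⟩
  · -- U ⊓ (L ⊔ Y) = ⊥ by dimension count
    have e1 := Submodule.finrank_sup_add_finrank_inf_eq U (L ⊔ Y)
    have e2 := Submodule.finrank_sup_add_finrank_inf_eq L Y
    have e3 := Submodule.finrank_sup_add_finrank_inf_eq U L
    have hUL : U ⊓ L = ⊥ := by rw [inf_comm]; exact hLU
    rw [hUL] at e3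
    have hsup : U ⊔ (L ⊔ Y) = P := by rw [← sup_assoc]; exact hYs
    rw [hsup] at e1
    have hle : finrank F ↥(L ⊔ Y) ≤ finrank F ↥L + finrank F ↥Y := by omega
    have hbot : finrank F ↥(U ⊓ (L ⊔ Y)) = 0 := by
      simp only [finrank_bot] at e3
      omega
    exact Submodule.finrank_eq_zero.mp hbot
  · rw [← sup_assoc]; exact hYs
  · have e1 := Submodule.finrank_sup_add_finrank_inf_eq U (L ⊔ Y)
    have e2 := Submodule.finrank_sup_add_finrank_inf_eq L Y
    have e3 := Submodule.finrank_sup_add_finrank_inf_eq U L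
    have hUL : U ⊓ L = ⊥ := by rw [inf_comm]; exact hLU
    rw [hUL] at e3
    have hsup : U ⊔ (L ⊔ Y) = P := by rw [← sup_assoc]; exact hYs
    rw [hsup] at e1
    simp only [finrank_bot] at e3
    omega

set_option maxHeartbeats 1000000 in
lemma star_lemma {n k t : ℕ} (ht2 : 2 ≤ t) (htk : t + 1 ≤ k)
    (π : Fin n → Submodule F V)
    (hinj : Function.Injective π)
    (hdim : ∀ i, finrank F ↥(π i) = k)
    (hint : ∀ i j, i ≠ j → finrank F ↥(π i ⊓ π j) = k - t ∨
      finrank F ↥(π i ⊓ π j) = k - t + 1)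
    (hnosun : ¬ ∃ p, 3 ≤ p ∧ HasMaxSunflower k (k - t) p (Set.range π))
    {a b m : Fin n} (hab : a ≠ b) (hblue : finrank F ↥(π a ⊓ π b) = k - t)
    (T : Finset (Fin n)) (haT : a ∈ T) (hbT : b ∈ T) (hmT : m ∉ T) :
    k - t + 1 ≤ finrank F ↥(π m ⊓ T.sup π) := by
  classical
  have hma : m ≠ a := fun h => hmT (h ▸ haT)
  have hmb : m ≠ b := fun h => hmT (h ▸ hbT)
  by_contra hlt
  push_neg at hlt
  have hCa' : π m ⊓ π a ≤ π m ⊓ T.sup π := inf_le_inf_left _ (Finset.le_sup haT)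
  have hCb' : π m ⊓ π b ≤ π m ⊓ T.sup π := inf_le_inf_left _ (Finset.le_sup hbT)
  have hma1 := Submodule.finrank_mono hCa'
  have hmb1 := Submodule.finrank_mono hCb'
  have hia : finrank F ↥(π m ⊓ π a) = k - t := by
    rcases hint m a hma with h | h
    · exact h
    · omega
  have hib : finrank F ↥(π m ⊓ π b) = k - t := by
    rcases hint m b hmb with h | h
    · exact h
    · omega
  have hCdim : finrank F ↥(π m ⊓ T.sup π) = k - t := by omega
  have hCa : π m ⊓ π a = π m ⊓ T.sup π :=
    Submodule.eq_of_le_of_finrank_le hCa' (by omega)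
  have hCb : π m ⊓ π b = π m ⊓ T.sup π :=
    Submodule.eq_of_le_of_finrank_le hCb' (by omega)
  have hCab : π m ⊓ T.sup π = π a ⊓ π b := by
    refine Submodule.eq_of_le_of_finrank_le (le_inf ?_ ?_) (by omega)
    · rw [← hCa]; exact inf_le_right
    · rw [← hCb]; exact inf_le_right
  have hab' : π a ≠ π b := fun h => hab (hinj h)
  have ham' : π a ≠ π m := fun h => hma (hinj h.symm)
  have hbm' : π b ≠ π m := fun h => hmb (hinj h.symm)
  have hker : π m ⊓ (π a ⊔ π b) = π m ⊓ T.sup π := by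
    refine le_antisymm (inf_le_inf_left _ (sup_le (Finset.le_sup haT) (Finset.le_sup hbT)))
      (le_inf inf_le_left ?_)
    rw [hCab]; exact le_trans inf_le_left le_sup_left
  apply hnosun
  refine ⟨3, le_refl 3, {π a, π b, π m}, ?_, ?_, π m ⊓ T.sup π, hCdim, ?_, ?_⟩
  · intro x hx
    simp only [Finset.coe_insert, Finset.coe_singleton, Set.mem_insert_iff,
      Set.mem_singleton_iff] at hx
    rcases hx with h | h | h
    · exact ⟨a, h.symm⟩
    · exact ⟨b, h.symm⟩
    · exact ⟨m, h.symm⟩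
  · rw [Finset.card_insert_of_notMem (by simp [hab', ham']),
      Finset.card_insert_of_notMem (by simp [hbm']), Finset.card_singleton]
  · have h1 : π a ⊓ π b = π m ⊓ T.sup π := hCab.symm
    have h2 : π b ⊓ π a = π m ⊓ T.sup π := by rw [inf_comm]; exact h1
    have h3 : π a ⊓ π m = π m ⊓ T.sup π := by rw [inf_comm]; exact hCa
    have h4 : π b ⊓ π m = π m ⊓ T.sup π := by rw [inf_comm]; exact hCb
    intro W hW W' hW' hne
    simp only [Finset.mem_insert, Finset.mem_singleton] at hW hW'
    rcases hW with rfl | rfl | rfl <;> rcases hW' with rfl | rfl | rfl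
    · exact absurd rfl hne
    · exact h1
    · exact h3
    · exact h2
    · exact absurd rfl hne
    · exact h4
    · exact hCa
    · exact hCb
    · exact absurd rfl hne
  · have hsup : ({π a, π b, π m} : Finset (Submodule F V)).sup id = (π a ⊔ π b) ⊔ π m := by
      simp [Finset.sup_insert, Finset.sup_singleton, sup_assoc]
    rw [hsup]
    have e1 := Submodule.finrank_sup_add_finrank_inf_eq (π a) (π b)
    have e2 := Submodule.finrank_sup_add_finrank_inf_eq (π a ⊔ π b) (π m)
    have hic : (π a ⊔ π b) ⊓ π m = π m ⊓ T.sup π := by rw [inf_comm]; exact hker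
    rw [hic, hCdim] at e2
    rw [hblue, hdim a, hdim b] at e1
    rw [hdim m] at e2
    have hkt : k - (k - t) = t := by omega
    rw [hkt]
    omega

lemma growth_lemma {n k t : ℕ} (ht2 : 2 ≤ t) (htk : t + 1 ≤ k)
    (π : Fin n → Submodule F V)
    (hinj : Function.Injective π)
    (hdim : ∀ i, finrank F ↥(π i) = k)
    (hint : ∀ i j, i ≠ j → finrank F ↥(π i ⊓ π j) = k - t ∨
      finrank F ↥(π i ⊓ π j) = k - t + 1)
    (hnosun : ¬ ∃ p, 3 ≤ p ∧ HasMaxSunflower k (k - t) p (Set.range π))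
    {a b : Fin n} (hab : a ≠ b) (hblue : finrank F ↥(π a ⊓ π b) = k - t)
    (R T : Finset (Fin n)) (haT : a ∈ T) (hbT : b ∈ T) (hdisj : Disjoint T R) :
    finrank F ↥((T ∪ R).sup π) ≤ finrank F ↥(T.sup π) + R.card * (t - 1) := by
  classical
  induction R using Finset.induction_on with
  | empty => rw [Finset.union_empty]; simp
  | @insert i R hiR IH =>
      have hdisj' : Disjoint T R := Finset.disjoint_insert_right.mp hdisj |>.2
      have hiT : i ∉ T := Finset.disjoint_insert_right.mp hdisj |>.1
      have hiTR : i ∉ T ∪ R := by simp [hiT, hiR]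
      have hun : T ∪ insert i R = insert i (T ∪ R) := Finset.union_insert i T R
      rw [hun, Finset.sup_insert]
      have e := Submodule.finrank_sup_add_finrank_inf_eq (π i) ((T ∪ R).sup π)
      have hstar := star_lemma ht2 htk π hinj hdim hint hnosun hab hblue (T ∪ R)
        (Finset.mem_union_left _ haT) (Finset.mem_union_left _ hbT) hiTR
      have hcard : (insert i R).card = R.card + 1 := Finset.card_insert_of_notMem hiR
      have hmul : (R.card + 1) * (t - 1) = R.card * (t - 1) + (t - 1) := by ring
      rw [hcard, hmul]
      have := hdim i
      have IH' := IH hdisj'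
      omega

lemma fullspan_eq {n : ℕ} (π : Fin n → Submodule F V) :
    (⨆ i, π i) = Finset.univ.sup π := by
  simp [Finset.sup_eq_iSup]

lemma supab_dim {n k t : ℕ} (htk : t + 1 ≤ k)
    (π : Fin n → Submodule F V)
    (hdim : ∀ i, finrank F ↥(π i) = k)
    {a b : Fin n} (hblue : finrank F ↥(π a ⊓ π b) = k - t) :
    finrank F ↥(π a ⊔ π b) = k + t := by
  have e1 := Submodule.finrank_sup_add_finrank_inf_eq (π a) (π b)
  rw [hblue, hdim a, hdim b] at e1
  omega

lemma lemA {n k t : ℕ} (ht2 : 2 ≤ t) (htk : t + 1 ≤ k) (hn : 3 ≤ n)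
    (π : Fin n → Submodule F V)
    (hinj : Function.Injective π)
    (hdim : ∀ i, finrank F ↥(π i) = k)
    (hint : ∀ i j, i ≠ j → finrank F ↥(π i ⊓ π j) = k - t ∨
      finrank F ↥(π i ⊓ π j) = k - t + 1)
    (hnosun : ¬ ∃ p, 3 ≤ p ∧ HasMaxSunflower k (k - t) p (Set.range π))
    (hspan : finrank F ↥(⨆ i, π i) = k + (n - 1) * (t - 1) + 1)
    {a b m : Fin n} (hab : a ≠ b) (hma : m ≠ a) (hmb : m ≠ b)
    (hblue : finrank F ↥(π a ⊓ π b) = k - t) :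
    finrank F ↥(π m ⊓ (π a ⊔ π b)) = k - t + 1 := by
  classical
  have hsupab := supab_dim htk π hdim hblue
  -- T0 = {a, b, m}
  have hm2 : m ∉ ({a, b} : Finset (Fin n)) := by simp [hma, hmb]
  have hab2 : a ∈ ({a, b} : Finset (Fin n)) := by simp
  have hbb2 : b ∈ ({a, b} : Finset (Fin n)) := by simp
  have hsab : ({a, b} : Finset (Fin n)).sup π = π a ⊔ π b := by
    simp [Finset.sup_insert, Finset.sup_singleton]
  -- upper bound on span of T0
  have hup : finrank F ↥((({a, b} : Finset (Fin n)) ∪ {m}).sup π) ≤ (k + t) + 1 * (t - 1) := by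
    have := growth_lemma ht2 htk π hinj hdim hint hnosun hab hblue {m} {a, b} hab2 hbb2
      (by simp [hma, hmb])
    rwa [hsab, hsupab, Finset.card_singleton] at this
  -- lower bound on span of T0
  have hT0 : (({a, b} : Finset (Fin n)) ∪ {m}) = ({a, b, m} : Finset (Fin n)) := by
    ext x; simp only [Finset.mem_union, Finset.mem_insert, Finset.mem_singleton]; tauto
  have hdown : finrank F ↥(Finset.univ.sup π) ≤
      finrank F ↥((({a, b} : Finset (Fin n)) ∪ {m}).sup π)
        + (Finset.univ \ ({a, b, m} : Finset (Fin n))).card * (t - 1) := by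
    have hcov : Finset.univ = ({a, b, m} : Finset (Fin n)) ∪
        (Finset.univ \ ({a, b, m} : Finset (Fin n))) := by
      rw [Finset.union_sdiff_of_subset (Finset.subset_univ _)]
    have := growth_lemma ht2 htk π hinj hdim hint hnosun hab hblue
      (Finset.univ \ ({a, b, m} : Finset (Fin n))) ({a, b, m} : Finset (Fin n))
      (by simp) (by simp) (Finset.disjoint_sdiff)
    rw [hT0]
    calc finrank F ↥(Finset.univ.sup π)
        = finrank F ↥((({a, b, m} : Finset (Fin n)) ∪
            (Finset.univ \ ({a, b, m} : Finset (Fin n)))).sup π) := by rw [← hcov]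
      _ ≤ _ := this
  -- cardinalities
  have hcard3 : ({a, b, m} : Finset (Fin n)).card = 3 := by
    rw [Finset.card_insert_of_notMem (by simp [hab, hma.symm]),
      Finset.card_insert_of_notMem (by simp [hmb.symm]), Finset.card_singleton]
  have hcards : (Finset.univ \ ({a, b, m} : Finset (Fin n))).card = n - 3 := by
    rw [Finset.card_sdiff_of_subset (Finset.subset_univ _), hcard3, Finset.card_univ, Fintype.card_fin]
  have hspan' : finrank F ↥(Finset.univ.sup π) = k + (n - 1) * (t - 1) + 1 := by
    rw [← fullspan_eq]; exact hspan
  rw [hspan', hcards] at hdown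
  -- arithmetic: pin down dim of span of T0
  have harith : (n - 1) * (t - 1) = (n - 3) * (t - 1) + 2 * (t - 1) := by
    rw [show n - 1 = (n - 3) + 2 by omega, add_mul]
  have hT0dim : finrank F ↥((({a, b} : Finset (Fin n)) ∪ {m}).sup π) = k + t + (t - 1) := by
    omega
  -- now extract the intersection dimension
  have hsupT0 : (({a, b} : Finset (Fin n)) ∪ {m}).sup π = (π a ⊔ π b) ⊔ π m := by
    rw [Finset.sup_union, hsab, Finset.sup_singleton]
  rw [hsupT0] at hT0dim
  have e2 := Submodule.finrank_sup_add_finrank_inf_eq (π a ⊔ π b) (π m)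
  rw [hT0dim, hsupab, hdim m] at e2
  rw [inf_comm] at e2
  omega

lemma lemB {n k t : ℕ} (ht2 : 2 ≤ t) (htk : t + 1 ≤ k) (hn : 3 ≤ n)
    (π : Fin n → Submodule F V)
    (hinj : Function.Injective π)
    (hdim : ∀ i, finrank F ↥(π i) = k)
    (hint : ∀ i j, i ≠ j → finrank F ↥(π i ⊓ π j) = k - t ∨
      finrank F ↥(π i ⊓ π j) = k - t + 1)
    (hnosun : ¬ ∃ p, 3 ≤ p ∧ HasMaxSunflower k (k - t) p (Set.range π))
    (hspan : finrank F ↥(⨆ i, π i) = k + (n - 1) * (t - 1) + 1)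
    {a b m : Fin n} (hab : a ≠ b) (hma : m ≠ a) (hmb : m ≠ b)
    (hblue : finrank F ↥(π a ⊓ π b) = k - t) :
    finrank F ↥(π m ⊓ (Finset.univ.erase m).sup π) = k - t + 1 := by
  classical
  have hsupab := supab_dim htk π hdim hblue
  have haT : a ∈ Finset.univ.erase m := by simp [hma.symm]
  have hbT : b ∈ Finset.univ.erase m := by simp [hmb.symm]
  have hsub : ({a, b} : Finset (Fin n)) ⊆ Finset.univ.erase m := by
    intro x hx; simp only [Finset.mem_insert, Finset.mem_singleton] at hx
    rcases hx with rfl | rfl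
    · exact haT
    · exact hbT
  have hsab : ({a, b} : Finset (Fin n)).sup π = π a ⊔ π b := by
    simp [Finset.sup_insert, Finset.sup_singleton]
  have hup : finrank F ↥((Finset.univ.erase m).sup π) ≤
      (k + t) + (n - 3) * (t - 1) := by
    have hcov : Finset.univ.erase m = ({a, b} : Finset (Fin n)) ∪
        (Finset.univ.erase m \ ({a, b} : Finset (Fin n))) := by
      rw [Finset.union_sdiff_of_subset hsub]
    have := growth_lemma ht2 htk π hinj hdim hint hnosun hab hblue
      (Finset.univ.erase m \ ({a, b} : Finset (Fin n))) ({a, b} : Finset (Fin n))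
      (by simp) (by simp) (Finset.disjoint_sdiff)
    rw [hsab] at this
    have hcards : (Finset.univ.erase m \ ({a, b} : Finset (Fin n))).card = n - 3 := by
      rw [Finset.card_sdiff_of_subset hsub, Finset.card_erase_of_mem (Finset.mem_univ m),
        Finset.card_univ, Fintype.card_fin]
      have : ({a, b} : Finset (Fin n)).card = 2 := by
        rw [Finset.card_insert_of_notMem (by simp [hab]), Finset.card_singleton]
      rw [this]
      omega
    calc finrank F ↥((Finset.univ.erase m).sup π)
        = finrank F ↥((({a, b} : Finset (Fin n)) ∪
            (Finset.univ.erase m \ ({a, b} : Finset (Fin n)))).sup π) := by rw [← hcov]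
      _ ≤ _ := by rw [hcards, hsupab] at this; exact this
  have hstar := star_lemma ht2 htk π hinj hdim hint hnosun hab hblue
    (Finset.univ.erase m) haT hbT (Finset.notMem_erase m _)
  have hins : Finset.univ = insert m (Finset.univ.erase m) := by
    rw [Finset.insert_erase (Finset.mem_univ m)]
  have e := Submodule.finrank_sup_add_finrank_inf_eq (π m) ((Finset.univ.erase m).sup π)
  have hspan' : finrank F ↥(Finset.univ.sup π) = k + (n - 1) * (t - 1) + 1 := by
    rw [← fullspan_eq]; exact hspan
  rw [hins, Finset.sup_insert] at hspan'
  rw [hspan', hdim m] at e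
  have harith : (n - 1) * (t - 1) = (n - 3) * (t - 1) + 2 * (t - 1) := by
    rw [show n - 1 = (n - 3) + 2 by omega, add_mul]
  omega

lemma pencil_junta {n k t : ℕ} (ht2 : 2 ≤ t) (htk : t + 1 ≤ k) (hn : 3 ≤ n)
    (π : Fin n → Submodule F V)
    (hdim : ∀ i, finrank F ↥(π i) = k)
    (hint : ∀ i j, i ≠ j → finrank F ↥(π i ⊓ π j) = k - t ∨
      finrank F ↥(π i ⊓ π j) = k - t + 1)
    (hspan : finrank F ↥(⨆ i, π i) = k + (n - 1) * (t - 1) + 1)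
    (hjunta : ¬ IsJunta (k - t) π)
    {b : Fin n} (W : Submodule F V) (hWdim : finrank F ↥W = k - t + 1)
    (hW : ∀ i, i ≠ b → W ≤ π i) : False := by
  classical
  -- the span of W together with any collection of members containing W is small
  have key : ∀ R : Finset (Fin n), (∀ i ∈ R, i ≠ b) →
      finrank F ↥(W ⊔ R.sup π) ≤ (k - t + 1) + R.card * (t - 1) := by
    intro R
    induction R using Finset.induction_on with
    | empty => intro _; rw [Finset.sup_empty, sup_bot_eq, hWdim]; simp
    | @insert i R hiR IH =>
        intro hR
        have hib : i ≠ b := hR i (Finset.mem_insert_self i R)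
        have hR' : ∀ j ∈ R, j ≠ b := fun j hj => hR j (Finset.mem_insert_of_mem hj)
        rw [Finset.sup_insert, ← sup_assoc, sup_comm W (π i), sup_assoc]
        have e := Submodule.finrank_sup_add_finrank_inf_eq (π i) (W ⊔ R.sup π)
        have hWi : W ≤ π i ⊓ (W ⊔ R.sup π) := le_inf (hW i hib) le_sup_left
        have h1 := Submodule.finrank_mono hWi
        have IH' := IH hR'
        have hcard : (insert i R).card = R.card + 1 := Finset.card_insert_of_notMem hiR
        have hmul : (R.card + 1) * (t - 1) = R.card * (t - 1) + (t - 1) := by ring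
        rw [hcard, hmul]
        have := hdim i
        omega
  -- apply to all members except b
  have herase : ∀ i ∈ Finset.univ.erase b, i ≠ b := fun i hi => Finset.ne_of_mem_erase hi
  have hbound := key (Finset.univ.erase b) herase
  have hcarde : (Finset.univ.erase b).card = n - 1 := by
    rw [Finset.card_erase_of_mem (Finset.mem_univ b), Finset.card_univ, Fintype.card_fin]
  have hle : finrank F ↥((Finset.univ.erase b).sup π) ≤ (k - t + 1) + (n - 1) * (t - 1) := by
    calc finrank F ↥((Finset.univ.erase b).sup π)
        ≤ finrank F ↥(W ⊔ (Finset.univ.erase b).sup π) := Submodule.finrank_mono le_sup_right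
      _ ≤ _ := by rw [← hcarde]; exact hbound
  -- compute the intersection of π b with the span of the rest
  have hins : Finset.univ = insert b (Finset.univ.erase b) := by
    rw [Finset.insert_erase (Finset.mem_univ b)]
  have hspan' : finrank F ↥(Finset.univ.sup π) = k + (n - 1) * (t - 1) + 1 := by
    rw [← fullspan_eq]; exact hspan
  rw [hins, Finset.sup_insert] at hspan'
  have e := Submodule.finrank_sup_add_finrank_inf_eq (π b) ((Finset.univ.erase b).sup π)
  rw [hspan', hdim b] at e
  -- pick an element different from b
  obtain ⟨a, ha⟩ : ∃ a : Fin n, a ≠ b :=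
    Fintype.exists_ne_of_one_lt_card (by simp only [Fintype.card_fin]; omega) b
  have hba' : π b ⊓ π a ≤ π b ⊓ (Finset.univ.erase b).sup π :=
    inf_le_inf_left _ (Finset.le_sup (by simp [ha]))
  have hba1 := Submodule.finrank_mono hba'
  have hbaD : k - t ≤ finrank F ↥(π b ⊓ π a) := by
    rcases hint b a (fun h => ha (h.symm)) with h | h <;> omega
  have hCdim : finrank F ↥(π b ⊓ (Finset.univ.erase b).sup π) = k - t := by omega
  -- this gives a junta
  apply hjunta
  refine ⟨π b ⊓ (Finset.univ.erase b).sup π, hCdim, fun i => ?_⟩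
  by_cases hib : i = b
  · rw [hib]; exact inf_le_left
  · have h1 : π b ⊓ π i ≤ π b ⊓ (Finset.univ.erase b).sup π :=
      inf_le_inf_left _ (Finset.le_sup (by simp [hib]))
    have h2 : k - t ≤ finrank F ↥(π b ⊓ π i) := by
      rcases hint b i (fun h => hib h.symm) with h | h <;> omega
    have := Submodule.eq_of_le_of_finrank_le h1 (by omega)
    rw [← this]
    exact inf_le_right

set_option maxHeartbeats 1000000 in
lemma regime1 {n k t : ℕ} (ht2 : 2 ≤ t) (htk : t + 1 ≤ k) (hn : 3 ≤ n)
    (π : Fin n → Submodule F V)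
    (hinj : Function.Injective π)
    (hdim : ∀ i, finrank F ↥(π i) = k)
    (hint : ∀ i j, i ≠ j → finrank F ↥(π i ⊓ π j) = k - t ∨
      finrank F ↥(π i ⊓ π j) = k - t + 1)
    (hnosun : ¬ ∃ p, 3 ≤ p ∧ HasMaxSunflower k (k - t) p (Set.range π))
    (hspan : finrank F ↥(⨆ i, π i) = k + (n - 1) * (t - 1) + 1)
    (hjunta : ¬ IsJunta (k - t) π)
    {a b : Fin n} (hab : a ≠ b) (hblue : finrank F ↥(π a ⊓ π b) = k - t)
    (hR1 : ∀ u v, u ≠ a → u ≠ b → v ≠ a → v ≠ b → u ≠ v →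
      finrank F ↥(π u ⊓ π v) = k - t + 1) :
    IsClassII k t n (Set.range π) := by
  classical
  -- the common (k-t+1)-space of the tail
  set E : Fin n → Submodule F V := fun u => π u ⊓ (π a ⊔ π b) with hE
  have hEdim : ∀ u, u ≠ a → u ≠ b → finrank F ↥(E u) = k - t + 1 := fun u hua hub =>
    lemA ht2 htk hn π hinj hdim hint hnosun hspan hab hua hub hblue
  have hEF : ∀ u, u ≠ a → u ≠ b → E u = π u ⊓ (Finset.univ.erase u).sup π := by
    intro u hua hub
    have hFdim := lemB ht2 htk hn π hinj hdim hint hnosun hspan hab hua hub hblue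
    refine Submodule.eq_of_le_of_finrank_le
      (le_inf inf_le_left (le_trans inf_le_right (sup_le
        (Finset.le_sup (by simp [hua.symm])) (Finset.le_sup (by simp [hub.symm]))))) ?_
    rw [hFdim, hEdim u hua hub]
  have hIE : ∀ u v, u ≠ a → u ≠ b → v ≠ u → π u ⊓ π v ≤ E u := by
    intro u v hua hub hvu
    rw [hEF u hua hub]
    exact inf_le_inf_left _ (Finset.le_sup (by simp [hvu]))
  have step2 : ∀ u v, u ≠ a → u ≠ b → v ≠ a → v ≠ b → u ≠ v → E u = E v := by
    intro u v hua hub hva hvb huv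
    have h1 : π u ⊓ π v ≤ E u := hIE u v hua hub (Ne.symm huv)
    have h2 : π u ⊓ π v = E u := Submodule.eq_of_le_of_finrank_le h1
      (by rw [hEdim u hua hub, hR1 u v hua hub hva hvb huv])
    have h1' : π v ⊓ π u ≤ E v := hIE v u hva hvb huv
    have h2' : π v ⊓ π u = E v := Submodule.eq_of_le_of_finrank_le h1'
      (by rw [hEdim v hva hvb, inf_comm, hR1 u v hua hub hva hvb huv])
    rw [← h2, ← h2', inf_comm]
  -- pick a tail element u0
  obtain ⟨u0, hu0⟩ : ∃ u0 : Fin n, u0 ≠ a ∧ u0 ≠ b := by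
    have hne : ((Finset.univ : Finset (Fin n)) \ {a, b}).Nonempty := by
      apply Finset.card_pos.mp
      rw [Finset.card_sdiff_of_subset (Finset.subset_univ _), Finset.card_univ, Fintype.card_fin]
      have h2 : ({a, b} : Finset (Fin n)).card ≤ 2 :=
        (Finset.card_insert_le a {b}).trans (by simp)
      omega
    obtain ⟨u0, hu0m⟩ := hne
    simp only [Finset.mem_sdiff, Finset.mem_univ, Finset.mem_insert, Finset.mem_singleton,
      true_and, not_or] at hu0m
    exact ⟨u0, hu0m⟩
  obtain ⟨hu0a, hu0b⟩ := hu0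
  set W : Submodule F V := E u0 with hW
  have hWdim : finrank F ↥W = k - t + 1 := hEdim u0 hu0a hu0b
  have hWall : ∀ u, u ≠ a → u ≠ b → E u = W := by
    intro u hua hub
    by_cases h : u = u0
    · rw [h]
    · exact step2 u u0 hua hub hu0a hu0b h
  have hWle : ∀ u, u ≠ a → u ≠ b → W ≤ π u := by
    intro u hua hub; rw [← hWall u hua hub]; exact inf_le_left
  -- W is not inside π a nor π b
  have hWa : ¬ W ≤ π a := by
    intro h
    exact pencil_junta ht2 htk hn π hdim hint hspan hjunta (b := b) W hWdim
      (fun i hib => by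
        by_cases hia : i = a
        · rw [hia]; exact h
        · exact hWle i hia hib)
  have hWb : ¬ W ≤ π b := by
    intro h
    exact pencil_junta ht2 htk hn π hdim hint hspan hjunta (b := a) W hWdim
      (fun i hia => by
        by_cases hib : i = b
        · rw [hib]; exact h
        · exact hWle i hia hib)
  -- all pairs from {a,b} to the tail are "blue"
  have step5a : ∀ u, u ≠ a → u ≠ b → finrank F ↥(π a ⊓ π u) = k - t := by
    intro u hua hub
    rcases hint a u (fun h => hua h.symm) with h | h
    · exact h
    · exfalso
      have h1 : π a ⊓ π u ≤ W := by
        rw [← hWall u hua hub]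
        exact le_trans (by rw [inf_comm]) (hIE u a hua hub (fun hh => hua hh.symm))
      have h2 : π a ⊓ π u = W := Submodule.eq_of_le_of_finrank_le h1 (by rw [hWdim, h])
      exact hWa (h2 ▸ inf_le_left)
  have step5b : ∀ u, u ≠ a → u ≠ b → finrank F ↥(π b ⊓ π u) = k - t := by
    intro u hua hub
    rcases hint b u (fun h => hub h.symm) with h | h
    · exact h
    · exfalso
      have h1 : π b ⊓ π u ≤ W := by
        rw [← hWall u hua hub]
        exact le_trans (by rw [inf_comm]) (hIE u b hua hub (fun hh => hub hh.symm))
      have h2 : π b ⊓ π u = W := Submodule.eq_of_le_of_finrank_le h1 (by rw [hWdim, h])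
      exact hWb (h2 ▸ inf_le_left)
  -- W1, W2
  set W1 : Submodule F V := π a ⊓ W with hW1
  set W2 : Submodule F V := π b ⊓ W with hW2
  have hW1le : ∀ u, u ≠ a → u ≠ b → π a ⊓ π u ≤ W1 := by
    intro u hua hub
    refine le_inf inf_le_left ?_
    rw [← hWall u hua hub]
    exact le_trans (by rw [inf_comm]) (hIE u a hua hub (fun hh => hua hh.symm))
  have hW2le : ∀ u, u ≠ a → u ≠ b → π b ⊓ π u ≤ W2 := by
    intro u hua hub
    refine le_inf inf_le_left ?_
    rw [← hWall u hua hub]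
    exact le_trans (by rw [inf_comm]) (hIE u b hua hub (fun hh => hub hh.symm))
  have hW1dim : finrank F ↥W1 = k - t := by
    have hle : finrank F ↥W1 ≤ k - t + 1 := hWdim ▸ Submodule.finrank_mono inf_le_right
    have hge : k - t ≤ finrank F ↥W1 :=
      (step5a u0 hu0a hu0b) ▸ Submodule.finrank_mono (hW1le u0 hu0a hu0b)
    rcases Nat.lt_or_ge (finrank F ↥W1) (k - t + 1) with h | h
    · omega
    · exfalso
      have : W1 = W := Submodule.eq_of_le_of_finrank_le inf_le_right (by omega)
      exact hWa (this ▸ inf_le_left)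
  have hW2dim : finrank F ↥W2 = k - t := by
    have hle : finrank F ↥W2 ≤ k - t + 1 := hWdim ▸ Submodule.finrank_mono inf_le_right
    have hge : k - t ≤ finrank F ↥W2 :=
      (step5b u0 hu0a hu0b) ▸ Submodule.finrank_mono (hW2le u0 hu0a hu0b)
    rcases Nat.lt_or_ge (finrank F ↥W2) (k - t + 1) with h | h
    · omega
    · exfalso
      have : W2 = W := Submodule.eq_of_le_of_finrank_le inf_le_right (by omega)
      exact hWb (this ▸ inf_le_left)
  have hW1eq : ∀ u, u ≠ a → u ≠ b → π a ⊓ π u = W1 := fun u hua hub =>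
    Submodule.eq_of_le_of_finrank_le (hW1le u hua hub)
      (by rw [hW1dim, step5a u hua hub])
  have hW2eq : ∀ u, u ≠ a → u ≠ b → π b ⊓ π u = W2 := fun u hua hub =>
    Submodule.eq_of_le_of_finrank_le (hW2le u hua hub)
      (by rw [hW2dim, step5b u hua hub])
  -- W1 ≠ W2
  have hW12 : W1 ≠ W2 := by
    intro h
    apply hjunta
    refine ⟨W1, hW1dim, fun i => ?_⟩
    by_cases hia : i = a
    · rw [hia]; exact inf_le_left
    · by_cases hib : i = b
      · rw [hib, h]; exact inf_le_left
      · rw [← hW1eq i hia hib]; exact inf_le_right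
  -- dimension bookkeeping on W1 ⊔ W2 and C
  have e12 := Submodule.finrank_sup_add_finrank_inf_eq W1 W2
  have hsup12 : finrank F ↥(W1 ⊔ W2) = k - t + 1 := by
    have hle : finrank F ↥(W1 ⊔ W2) ≤ k - t + 1 :=
      hWdim ▸ Submodule.finrank_mono (sup_le inf_le_right inf_le_right)
    have hge1 : finrank F ↥W1 ≤ finrank F ↥(W1 ⊔ W2) := Submodule.finrank_mono le_sup_left
    rcases Nat.lt_or_ge (finrank F ↥(W1 ⊔ W2)) (k - t + 1) with h | h
    · exfalso
      have h1 : W1 = W1 ⊔ W2 := Submodule.eq_of_le_of_finrank_le le_sup_left (by omega)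
      have h2 : W2 = W1 ⊔ W2 := Submodule.eq_of_le_of_finrank_le le_sup_right (by omega)
      exact hW12 (h1.trans h2.symm)
    · omega
  have hinf12 : finrank F ↥(W1 ⊓ W2) = k - t - 1 := by
    rw [hsup12, hW1dim, hW2dim] at e12; omega
  have hktpos : 1 ≤ k - t := by omega
  -- C = π a ⊓ π b and the line L
  have hCW : π a ⊓ π b ⊓ W = W1 ⊓ W2 := by
    apply le_antisymm
    · exact le_inf (le_inf (inf_le_left.trans inf_le_left) inf_le_right)
        (le_inf (inf_le_left.trans inf_le_right) inf_le_right)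
    · exact le_inf (le_inf (inf_le_left.trans inf_le_left) (inf_le_right.trans inf_le_left))
        (inf_le_left.trans inf_le_right)
  -- the line L inside C complementary to W1 ⊓ W2
  have hW12C : W1 ⊓ W2 ≤ π a ⊓ π b :=
    le_inf (inf_le_left.trans inf_le_left) (inf_le_right.trans inf_le_left)
  obtain ⟨L, hLC, hLi, hLs, hLr⟩ := exists_compl_le hW12C
  have hLdim : finrank F ↥L = 1 := by rw [hinf12, hblue] at hLr; omega
  have hLW1 : L ⊓ W1 = ⊥ := by
    have h1 : L ⊓ W1 ≤ (W1 ⊓ W2) ⊓ L := by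
      refine le_inf (le_inf inf_le_right ?_) inf_le_left
      calc L ⊓ W1 ≤ (π a ⊓ π b) ⊓ W :=
            le_inf (inf_le_left.trans hLC) (inf_le_right.trans inf_le_right)
        _ = W1 ⊓ W2 := hCW
        _ ≤ W2 := inf_le_right
    exact le_bot_iff.mp (h1.trans_eq hLi)
  have hLW2 : L ⊓ W2 = ⊥ := by
    have h1 : L ⊓ W2 ≤ (W1 ⊓ W2) ⊓ L := by
      refine le_inf (le_inf ?_ inf_le_right) inf_le_left
      calc L ⊓ W2 ≤ (π a ⊓ π b) ⊓ W :=
            le_inf (inf_le_left.trans hLC) (inf_le_right.trans inf_le_right)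
        _ = W1 ⊓ W2 := hCW
        _ ≤ W1 := inf_le_left
    exact le_bot_iff.mp (h1.trans_eq hLi)
  -- the complements X1 and X2
  obtain ⟨X1, hLX1, hX1a, hX1i, hX1s, hX1r⟩ :=
    exists_compl_le_containing (inf_le_left : W1 ≤ π a) (hLC.trans inf_le_left) hLW1
  obtain ⟨X2, hLX2, hX2b, hX2i, hX2s, hX2r⟩ :=
    exists_compl_le_containing (inf_le_left : W2 ≤ π b) (hLC.trans inf_le_right) hLW2
  have hX1dim : finrank F ↥X1 = t := by rw [hW1dim, hdim a] at hX1r; omega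
  have hX2dim : finrank F ↥X2 = t := by rw [hW2dim, hdim b] at hX2r; omega
  -- X1 ⊓ X2 = L
  have hCsub : π a ⊓ π b ≤ W1 ⊔ L := by
    rw [← hLs]
    exact sup_le (inf_le_left.trans le_sup_left) le_sup_right
  have hYL : X1 ⊓ (W1 ⊔ L) = L := by
    have hYW1 : (X1 ⊓ (W1 ⊔ L)) ⊓ W1 = ⊥ := by
      have h1 : (X1 ⊓ (W1 ⊔ L)) ⊓ W1 ≤ W1 ⊓ X1 :=
        le_inf inf_le_right (inf_le_left.trans inf_le_left)
      exact le_bot_iff.mp (h1.trans_eq hX1i)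
    have e := Submodule.finrank_sup_add_finrank_inf_eq (X1 ⊓ (W1 ⊔ L)) W1
    rw [hYW1] at e
    have h2 : finrank F ↥((X1 ⊓ (W1 ⊔ L)) ⊔ W1) ≤ finrank F ↥(W1 ⊔ L) :=
      Submodule.finrank_mono (sup_le inf_le_right le_sup_left)
    have e2 := Submodule.finrank_sup_add_finrank_inf_eq W1 L
    have hfb : finrank F ↥(⊥ : Submodule F V) = 0 := finrank_bot F V
    have hY1 : finrank F ↥(X1 ⊓ (W1 ⊔ L)) ≤ 1 := by
      rw [hW1dim] at e e2
      rw [hLdim] at e2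
      omega
    exact (Submodule.eq_of_le_of_finrank_le (le_inf hLX1 le_sup_right)
      (by rw [hLdim]; exact hY1)).symm
  have hX12 : X1 ⊓ X2 = L := by
    refine le_antisymm ?_ (le_inf hLX1 hLX2)
    have h1 : X1 ⊓ X2 ≤ π a ⊓ π b := le_inf (inf_le_left.trans hX1a) (inf_le_right.trans hX2b)
    calc X1 ⊓ X2 ≤ X1 ⊓ (W1 ⊔ L) := le_inf inf_le_left (h1.trans hCsub)
      _ = L := hYL
  have eX := Submodule.finrank_sup_add_finrank_inf_eq X1 X2
  rw [hX12, hLdim, hX1dim, hX2dim] at eX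
  have hXs : finrank F ↥(X1 ⊔ X2) = 2 * t - 1 := by omega
  -- complements of W in the tail members
  have hMex : ∀ u : Fin n, ∃ Mu : Submodule F V, u ≠ a → u ≠ b →
      (Mu ≤ π u ∧ W ⊔ Mu = π u ∧ finrank F ↥Mu = t - 1) := by
    intro u
    by_cases h : u ≠ a ∧ u ≠ b
    · obtain ⟨Mu, h1, h2, h3, h4⟩ := exists_compl_le (hWle u h.1 h.2)
      exact ⟨Mu, fun _ _ => ⟨h1, h3, by rw [hWdim, hdim u] at h4; omega⟩⟩
    · exact ⟨⊥, fun h1 h2 => absurd ⟨h1, h2⟩ h⟩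
  choose Mc hMc using hMex
  -- enumerate the tail
  have hTTcard : (Finset.univ \ {a, b} : Finset (Fin n)).card = n - 2 := by
    rw [Finset.card_sdiff_of_subset (Finset.subset_univ _), Finset.card_univ, Fintype.card_fin,
      show ({a, b} : Finset (Fin n)).card = 2 by
        rw [Finset.card_insert_of_notMem (by simp [hab]), Finset.card_singleton]]
  have hTTmem : ∀ u : Fin n, u ∈ (Finset.univ \ {a, b} : Finset (Fin n)) ↔ u ≠ a ∧ u ≠ b := by
    intro u
    simp [Finset.mem_sdiff, not_or]
  let e : Fin (n - 2) ≃ {x // x ∈ (Finset.univ \ {a, b} : Finset (Fin n))} :=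
    (finCongr hTTcard.symm).trans (Finset.univ \ {a, b} : Finset (Fin n)).equivFin.symm
  refine ⟨W, W1, W2, X1, X2, fun j => Mc ((e j : Fin n)), hWdim, inf_le_right, inf_le_right,
    hW1dim, hW2dim, hX1dim, hX2dim, hXs, ?_, ?_, ?_⟩
  · intro j
    have hj := (hTTmem _).mp (e j).2
    exact (hMc _ hj.1 hj.2).2.2
  · -- total span
    have hZ : W ⊔ (X1 ⊔ X2) ⊔ (⨆ j, Mc ((e j : Fin n))) = ⨆ i, π i := by
      apply le_antisymm
      · refine sup_le (sup_le ?_ (sup_le ?_ ?_)) ?_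
        · exact (hWle u0 hu0a hu0b).trans (le_iSup π u0)
        · exact hX1a.trans (le_iSup π a)
        · exact hX2b.trans (le_iSup π b)
        · refine iSup_le fun j => ?_
          have hj := (hTTmem _).mp (e j).2
          exact ((hMc _ hj.1 hj.2).1).trans (le_iSup π _)
      · refine iSup_le fun i => ?_
        by_cases hia : i = a
        · subst hia
          rw [← hX1s]
          exact sup_le (inf_le_right.trans (le_sup_left.trans le_sup_left))
            ((le_sup_left.trans le_sup_right).trans le_sup_left)
        · by_cases hib : i = b
          · subst hib
            rw [← hX2s]
            exact sup_le (inf_le_right.trans (le_sup_left.trans le_sup_left))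
              ((le_sup_right.trans le_sup_right).trans le_sup_left)
          · rw [← (hMc i hia hib).2.1]
            refine sup_le (le_sup_left.trans le_sup_left) ?_
            have : Mc i = Mc ((e (e.symm ⟨i, (hTTmem i).mpr ⟨hia, hib⟩⟩) : Fin n)) := by
              rw [Equiv.apply_symm_apply]
            rw [this]
            exact (le_iSup (fun j => Mc ((e j : Fin n))) (e.symm ⟨i, _⟩)).trans le_sup_right
    rw [hZ, hspan]
    have harith : (n - 1) * (t - 1) = (n - 2) * (t - 1) + (t - 1) := by
      rw [show n - 1 = (n - 2) + 1 by omega, add_mul, one_mul]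
    omega
  · -- set equality
    ext x
    simp only [Set.mem_union, Set.mem_insert_iff, Set.mem_singleton_iff, Set.mem_range]
    constructor
    · rintro ⟨i, rfl⟩
      by_cases hia : i = a
      · exact Or.inl (Or.inl (by rw [hia, ← hX1s]))
      · by_cases hib : i = b
        · exact Or.inl (Or.inr (by rw [hib, ← hX2s]))
        · refine Or.inr ⟨e.symm ⟨i, (hTTmem i).mpr ⟨hia, hib⟩⟩, ?_⟩
          have : Mc ((e (e.symm ⟨i, (hTTmem i).mpr ⟨hia, hib⟩⟩) : Fin n)) = Mc i := by
            rw [Equiv.apply_symm_apply]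
          rw [this]
          exact (hMc i hia hib).2.1
    · rintro (⟨h | h⟩ | ⟨j, rfl⟩)
      · exact ⟨a, by rw [h, ← hX1s]⟩
      · exact ⟨b, by rw [h, ← hX2s]⟩
      · have hj := (hTTmem _).mp (e j).2
        exact ⟨(e j : Fin n), (hMc _ hj.1 hj.2).2.1.symm⟩


set_option maxHeartbeats 2000000 in
lemma regime2 {n k t : ℕ} (ht2 : 2 ≤ t) (htk : t + 1 ≤ k) (hn : 3 ≤ n)
    (π : Fin n → Submodule F V)
    (hinj : Function.Injective π)
    (hdim : ∀ i, finrank F ↥(π i) = k)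
    (hint : ∀ i j, i ≠ j → finrank F ↥(π i ⊓ π j) = k - t ∨
      finrank F ↥(π i ⊓ π j) = k - t + 1)
    (hnosun : ¬ ∃ p, 3 ≤ p ∧ HasMaxSunflower k (k - t) p (Set.range π))
    (hspan : finrank F ↥(⨆ i, π i) = k + (n - 1) * (t - 1) + 1)
    (hjunta : ¬ IsJunta (k - t) π)
    {a b u0 v0 : Fin n} (hab : a ≠ b) (hblue : finrank F ↥(π a ⊓ π b) = k - t)
    (hu0a : u0 ≠ a) (hu0b : u0 ≠ b) (hv0a : v0 ≠ a) (hv0b : v0 ≠ b) (hu0v0 : u0 ≠ v0)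
    (hblue2 : finrank F ↥(π u0 ⊓ π v0) = k - t) :
    ∃ s, 2 ≤ s ∧ s < n ∧ IsClassIV k t n s (Set.range π) := by
  classical
  set Φ : Fin n → Submodule F V := fun i => π i ⊓ (Finset.univ.erase i).sup π with hΦ
  have hΦdim : ∀ i, finrank F ↥(Φ i) = k - t + 1 := by
    intro i
    by_cases hia : i = a
    · exact hia ▸ lemB ht2 htk hn π hinj hdim hint hnosun hspan hu0v0
        (Ne.symm hu0a) (Ne.symm hv0a) hblue2
    · by_cases hib : i = b
      · exact hib ▸ lemB ht2 htk hn π hinj hdim hint hnosun hspan hu0v0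
          (Ne.symm hu0b) (Ne.symm hv0b) hblue2
      · exact lemB ht2 htk hn π hinj hdim hint hnosun hspan hab hia hib hblue
  have hΦle : ∀ i, Φ i ≤ π i := fun i => inf_le_left
  have hIΦ : ∀ i j, j ≠ i → π i ⊓ π j ≤ Φ i := fun i j hji =>
    inf_le_inf_left _ (Finset.le_sup (by simp [hji]))
  have hred : ∀ i j, i ≠ j → finrank F ↥(π i ⊓ π j) = k - t + 1 → Φ i = Φ j := by
    intro i j hij hr
    have h1 : π i ⊓ π j = Φ i := Submodule.eq_of_le_of_finrank_le (hIΦ i j (Ne.symm hij))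
      (by rw [hΦdim i, hr])
    have h2 : π j ⊓ π i = Φ j := Submodule.eq_of_le_of_finrank_le (hIΦ j i hij)
      (by rw [hΦdim j, inf_comm, hr])
    rw [← h1, ← h2, inf_comm]
  have hblueNe : ∀ i j, i ≠ j → finrank F ↥(π i ⊓ π j) = k - t → Φ i ≠ Φ j := by
    intro i j hij hb heq
    have h1 : Φ i ≤ π i ⊓ π j := le_inf (hΦle i) (heq ▸ hΦle j)
    have := Submodule.finrank_mono h1
    rw [hΦdim i, hb] at this
    omega
  have hΦneq_inf : ∀ i j, i ≠ j → Φ i ≠ Φ j →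
      finrank F ↥(Φ i ⊓ Φ j) = k - t ∧ π i ⊓ π j ≤ Φ i ⊓ Φ j := by
    intro i j hij hne
    have hb : finrank F ↥(π i ⊓ π j) = k - t := by
      rcases hint i j hij with h | h
      · exact h
      · exact absurd (hred i j hij h) hne
    have hle : π i ⊓ π j ≤ Φ i ⊓ Φ j := le_inf (hIΦ i j (Ne.symm hij))
      (by rw [inf_comm]; exact hIΦ j i hij)
    refine ⟨?_, hle⟩
    have hge := Submodule.finrank_mono hle
    have hle2 := Submodule.finrank_mono (inf_le_left : Φ i ⊓ Φ j ≤ Φ i)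
    rw [hb] at hge
    rw [hΦdim i] at hle2
    rcases Nat.lt_or_ge (finrank F ↥(Φ i ⊓ Φ j)) (k - t + 1) with h | h
    · omega
    · exfalso
      have e1 : Φ i ⊓ Φ j = Φ i := Submodule.eq_of_le_of_finrank_le inf_le_left
        (by rw [hΦdim i]; omega)
      have e2 : Φ i ⊓ Φ j = Φ j := Submodule.eq_of_le_of_finrank_le inf_le_right
        (by rw [hΦdim j]; omega)
      exact hne (e1.symm.trans e2)
  have hjunta2 : ¬ ∃ C : Submodule F V, finrank F ↥C = k - t ∧ ∀ i, C ≤ Φ i := by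
    rintro ⟨C, hCd, hC⟩
    exact hjunta ⟨C, hCd, fun i => (hC i).trans (hΦle i)⟩
  have hΦab : Φ a ≠ Φ b := hblueNe a b hab hblue
  have hC0dim : finrank F ↥(Φ a ⊓ Φ b) = k - t := (hΦneq_inf a b hab hΦab).1
  obtain ⟨m, hm⟩ : ∃ m, ¬ Φ a ⊓ Φ b ≤ Φ m := by
    by_contra h
    push_neg at h
    exact hjunta2 ⟨Φ a ⊓ Φ b, hC0dim, h⟩
  -- the pencil step
  have pstep : ∀ x y z : Fin n, x ≠ y → Φ x ≠ Φ y → ¬ (Φ x ⊓ Φ y ≤ Φ z) →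
      Φ z ≤ Φ x ⊔ Φ y := by
    intro x y z hxy hne hnle
    have hzx : Φ z ≠ Φ x := fun h => hnle (h ▸ inf_le_left)
    have hzy : Φ z ≠ Φ y := fun h => hnle (h ▸ inf_le_right)
    have hzx' : z ≠ x := fun h => hzx (by rw [h])
    have hzy' : z ≠ y := fun h => hzy (by rw [h])
    have h1 := (hΦneq_inf z x hzx' hzx).1
    have h2 := (hΦneq_inf z y hzy' hzy).1
    have hxy1 := (hΦneq_inf x y hxy hne).1
    have hne2 : Φ z ⊓ Φ x ≠ Φ z ⊓ Φ y := by
      intro h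
      have hD : Φ z ⊓ Φ x ≤ Φ x ⊓ Φ y := le_inf inf_le_right (h ▸ inf_le_right)
      have heq : Φ z ⊓ Φ x = Φ x ⊓ Φ y :=
        Submodule.eq_of_le_of_finrank_le hD (by rw [h1, hxy1])
      exact hnle (heq ▸ inf_le_left)
    have e := Submodule.finrank_sup_add_finrank_inf_eq (Φ z ⊓ Φ x) (Φ z ⊓ Φ y)
    have hii : finrank F ↥((Φ z ⊓ Φ x) ⊓ (Φ z ⊓ Φ y)) ≤ k - t - 1 := by
      have hle := Submodule.finrank_mono (inf_le_left : (Φ z ⊓ Φ x) ⊓ (Φ z ⊓ Φ y) ≤ Φ z ⊓ Φ x)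
      rw [h1] at hle
      rcases Nat.lt_or_ge (finrank F ↥((Φ z ⊓ Φ x) ⊓ (Φ z ⊓ Φ y))) (k - t) with h | h
      · omega
      · exfalso
        have e1 : (Φ z ⊓ Φ x) ⊓ (Φ z ⊓ Φ y) = Φ z ⊓ Φ x :=
          Submodule.eq_of_le_of_finrank_le inf_le_left (by omega)
        have e2 : (Φ z ⊓ Φ x) ⊓ (Φ z ⊓ Φ y) = Φ z ⊓ Φ y :=
          Submodule.eq_of_le_of_finrank_le inf_le_right
            (by rw [h2]; omega)
        exact hne2 (e1.symm.trans e2)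
    have hsub : (Φ z ⊓ Φ x) ⊔ (Φ z ⊓ Φ y) ≤ Φ z ⊓ (Φ x ⊔ Φ y) :=
      sup_le (le_inf inf_le_left (inf_le_right.trans le_sup_left))
        (le_inf inf_le_left (inf_le_right.trans le_sup_right))
    have hgood := Submodule.finrank_mono hsub
    have hktpos : 1 ≤ k - t := by omega
    have hgood2 : k - t + 1 ≤ finrank F ↥(Φ z ⊓ (Φ x ⊔ Φ y)) := by omega
    have h3 : Φ z ⊓ (Φ x ⊔ Φ y) = Φ z :=
      Submodule.eq_of_le_of_finrank_le inf_le_left (by rw [hΦdim z]; omega)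
    rw [← h3]
    exact inf_le_right
  -- all Φ i lie in V' = Φ a ⊔ Φ b
  have hVdim : finrank F ↥(Φ a ⊔ Φ b) = k - t + 2 := by
    have e := Submodule.finrank_sup_add_finrank_inf_eq (Φ a) (Φ b)
    rw [hC0dim, hΦdim a, hΦdim b] at e
    omega
  have hmV : Φ m ≤ Φ a ⊔ Φ b := pstep a b m hab hΦab hm
  have hma : Φ a ≠ Φ m := fun h => hm (h ▸ inf_le_left)
  have ham' : a ≠ m := fun h => hma (by rw [h])
  have hall : ∀ i, Φ i ≤ Φ a ⊔ Φ b := by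
    intro i
    by_cases h0 : Φ a ⊓ Φ b ≤ Φ i
    · by_cases hia : Φ i = Φ a
      · rw [hia]; exact le_sup_left
      · by_cases hib : Φ i = Φ b
        · rw [hib]; exact le_sup_right
        · have hC1 := (hΦneq_inf a m ham' hma).1
          have hC1i : ¬ (Φ a ⊓ Φ m ≤ Φ i) := by
            intro hle
            have hne01 : Φ a ⊓ Φ b ≠ Φ a ⊓ Φ m := fun h => hm (h ▸ inf_le_right)
            have e := Submodule.finrank_sup_add_finrank_inf_eq (Φ a ⊓ Φ b) (Φ a ⊓ Φ m)
            have hii : finrank F ↥((Φ a ⊓ Φ b) ⊓ (Φ a ⊓ Φ m)) ≤ k - t - 1 := by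
              have hle2 := Submodule.finrank_mono
                (inf_le_left : (Φ a ⊓ Φ b) ⊓ (Φ a ⊓ Φ m) ≤ Φ a ⊓ Φ b)
              rw [hC0dim] at hle2
              rcases Nat.lt_or_ge (finrank F ↥((Φ a ⊓ Φ b) ⊓ (Φ a ⊓ Φ m))) (k - t) with h | h
              · omega
              · exfalso
                have e1 : (Φ a ⊓ Φ b) ⊓ (Φ a ⊓ Φ m) = Φ a ⊓ Φ b :=
                  Submodule.eq_of_le_of_finrank_le inf_le_left (by omega)
                have e2 : (Φ a ⊓ Φ b) ⊓ (Φ a ⊓ Φ m) = Φ a ⊓ Φ m :=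
                  Submodule.eq_of_le_of_finrank_le inf_le_right (by rw [hC1]; omega)
                exact hne01 (e1.symm.trans e2)
            have hsle : (Φ a ⊓ Φ b) ⊔ (Φ a ⊓ Φ m) ≤ Φ a := sup_le inf_le_left inf_le_left
            have hktpos : 1 ≤ k - t := by omega
            have hgood := Submodule.finrank_mono hsle
            have heqa : (Φ a ⊓ Φ b) ⊔ (Φ a ⊓ Φ m) = Φ a :=
              Submodule.eq_of_le_of_finrank_le hsle (by rw [hΦdim a]; omega)
            have hfin : Φ a ≤ Φ i := heqa ▸ sup_le h0 hle
            have : Φ a = Φ i := Submodule.eq_of_le_of_finrank_le hfin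
              (by rw [hΦdim a, hΦdim i])
            exact hia this.symm
          exact (pstep a m i ham' hma hC1i).trans (sup_le le_sup_left hmV)
    · exact pstep a b i hab hΦab h0
  -- complements
  have hMex : ∀ i : Fin n, ∃ Mi : Submodule F V,
      Mi ≤ π i ∧ Φ i ⊔ Mi = π i ∧ finrank F ↥Mi = t - 1 := by
    intro i
    obtain ⟨Mi, h1, h2, h3, h4⟩ := exists_compl_le (hΦle i)
    exact ⟨Mi, h1, h3, by rw [hΦdim i, hdim i] at h4; omega⟩
  choose Mc hMc1 hMc2 hMc3 using hMex
  -- the tail and its Φ-values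
  have hTTcard : (Finset.univ \ {a, b} : Finset (Fin n)).card = n - 2 := by
    rw [Finset.card_sdiff_of_subset (Finset.subset_univ _), Finset.card_univ, Fintype.card_fin,
      show ({a, b} : Finset (Fin n)).card = 2 by
        rw [Finset.card_insert_of_notMem (by simp [hab]), Finset.card_singleton]]
  have hTTmem : ∀ u : Fin n, u ∈ (Finset.univ \ {a, b} : Finset (Fin n)) ↔ u ≠ a ∧ u ≠ b := by
    intro u
    simp [Finset.mem_sdiff, not_or]
  set G : Finset (Submodule F V) := (Finset.univ \ {a, b} : Finset (Fin n)).image Φ with hG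
  have hGmem : ∀ x, x ∈ G ↔ ∃ u, (u ≠ a ∧ u ≠ b) ∧ Φ u = x := by
    intro x
    simp only [hG, Finset.mem_image]
    constructor
    · rintro ⟨u, hu, rfl⟩
      exact ⟨u, (hTTmem u).mp hu, rfl⟩
    · rintro ⟨u, hu, rfl⟩
      exact ⟨u, (hTTmem u).mpr hu, rfl⟩
  have hs2 : 2 ≤ G.card := by
    rw [show (2 : ℕ) = 1 + 1 by rfl]
    refine Finset.one_lt_card.mpr ?_
    exact ⟨Φ u0, (hGmem _).mpr ⟨u0, ⟨hu0a, hu0b⟩, rfl⟩,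
      Φ v0, (hGmem _).mpr ⟨v0, ⟨hv0a, hv0b⟩, rfl⟩, hblueNe u0 v0 hu0v0 hblue2⟩
  have hsn : G.card < n := by
    have h1 := Finset.card_image_le (s := (Finset.univ \ {a, b} : Finset (Fin n))) (f := Φ)
    rw [← hG, hTTcard] at h1
    omega
  refine ⟨G.card, hs2, hsn, ?_⟩
  set Wf : Fin G.card → Submodule F V := fun h => ((G.equivFin.symm h : ↑G) : Submodule F V)
    with hWf
  have hWfinj : Function.Injective Wf := by
    intro h1 h2 hh
    exact G.equivFin.symm.injective (Subtype.ext hh)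
  have hWfmem : ∀ h, Wf h ∈ G := fun h => (G.equivFin.symm h).2
  let e : Fin (n - 2) ≃ {x // x ∈ (Finset.univ \ {a, b} : Finset (Fin n))} :=
    (finCongr hTTcard.symm).trans (Finset.univ \ {a, b} : Finset (Fin n)).equivFin.symm
  have heΦG : ∀ j : Fin (n - 2), Φ ((e j : Fin n)) ∈ G := by
    intro j
    have hj := (hTTmem _).mp (e j).2
    exact (hGmem _).mpr ⟨_, hj, rfl⟩
  set c : Fin (n - 2) → Fin G.card := fun j => G.equivFin ⟨Φ ((e j : Fin n)), heΦG j⟩ with hc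
  have hWfc : ∀ j, Wf (c j) = Φ ((e j : Fin n)) := by
    intro j
    rw [hWf, hc]
    simp only [Equiv.symm_apply_apply]
  have hcsurj : Function.Surjective c := by
    intro h
    obtain ⟨u, hu, hΦu⟩ := (hGmem (Wf h)).mp (hWfmem h)
    refine ⟨e.symm ⟨u, (hTTmem u).mpr hu⟩, ?_⟩
    have h1 : ((e (e.symm ⟨u, (hTTmem u).mpr hu⟩) : Fin n)) = u := by
      rw [Equiv.apply_symm_apply]
    apply G.equivFin.symm.injective
    rw [hc]
    simp only [Equiv.symm_apply_apply]
    apply Subtype.ext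
    simp only [h1]
    exact hΦu
  -- the function M'
  set M' : ℕ → Submodule F V := fun i =>
    if i = 0 then Mc a else if i = 1 then Mc b
    else if hlt : i - 2 < n - 2 then Mc ((e ⟨i - 2, hlt⟩ : Fin n)) else ⊥ with hM'
  have hM'0 : M' 0 = Mc a := by simp [hM']
  have hM'1 : M' 1 = Mc b := by simp [hM']
  have hM'j : ∀ j : Fin (n - 2), M' ((j : ℕ) + 2) = Mc ((e j : Fin n)) := by
    intro j
    have h0 : (j : ℕ) + 2 ≠ 0 := by omega
    have h1 : (j : ℕ) + 2 ≠ 1 := by omega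
    have hlt : (j : ℕ) + 2 - 2 < n - 2 := by simpa using j.2
    rw [hM']
    simp only [if_neg h0, if_neg h1, dif_pos hlt]
    have hfin : (⟨(j : ℕ) + 2 - 2, hlt⟩ : Fin (n - 2)) = j := by
      apply Fin.ext
      simp
    rw [hfin]
  refine ⟨Φ a ⊔ Φ b, Φ a, Φ b, Wf, M', c, hVdim, ?_, ?_, le_sup_left, hΦdim a,
    le_sup_right, hΦdim b, ?_, hWfinj, ?_, hcsurj, ?_⟩
  · -- dims of M'
    intro i hi
    rcases Nat.lt_or_ge i 2 with h2 | h2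
    · interval_cases i
      · rw [hM'0]; exact hMc3 a
      · rw [hM'1]; exact hMc3 b
    · have hlt : i - 2 < n - 2 := by omega
      have : i = (i - 2) + 2 := by omega
      rw [this, hM'j ⟨i - 2, hlt⟩]
      exact hMc3 _
  · -- total span
    have hZ : (Φ a ⊔ Φ b) ⊔ (⨆ i ∈ Finset.range n, M' i) = ⨆ i, π i := by
      apply le_antisymm
      · refine sup_le (sup_le ((hΦle a).trans (le_iSup π a)) ((hΦle b).trans (le_iSup π b))) ?_
        refine iSup₂_le fun i hi => ?_
        rcases Nat.lt_or_ge i 2 with h2 | h2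
        · interval_cases i
          · rw [hM'0]; exact (hMc1 a).trans (le_iSup π a)
          · rw [hM'1]; exact (hMc1 b).trans (le_iSup π b)
        · have hin : i < n := by simpa using hi
          have hlt : i - 2 < n - 2 := by omega
          have : i = (i - 2) + 2 := by omega
          rw [this, hM'j ⟨i - 2, hlt⟩]
          exact (hMc1 _).trans (le_iSup π _)
      · refine iSup_le fun i => ?_
        rw [← hMc2 i]
        by_cases hia : i = a
        · subst hia
          refine sup_le ((hall i).trans le_sup_left) ?_
          rw [← hM'0]
          exact (le_iSup₂ (f := fun i _ => M' i) 0 (by simp; omega)).trans le_sup_right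
        · by_cases hib : i = b
          · subst hib
            refine sup_le ((hall i).trans le_sup_left) ?_
            rw [← hM'1]
            exact (le_iSup₂ (f := fun i _ => M' i) 1 (by simp; omega)).trans le_sup_right
          · refine sup_le ((hall i).trans le_sup_left) ?_
            set j : Fin (n - 2) := e.symm ⟨i, (hTTmem i).mpr ⟨hia, hib⟩⟩ with hj
            have h1 : ((e j : Fin n)) = i := by rw [hj, Equiv.apply_symm_apply]
            have h2 : Mc i = M' ((j : ℕ) + 2) := by rw [hM'j j, h1]
            rw [h2]
            have hjn : (j : ℕ) + 2 < n := by have := j.2; omega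
            exact (le_iSup₂ (f := fun i _ => M' i) ((j : ℕ) + 2) (by simpa using hjn)).trans
              le_sup_right
    rw [hZ, hspan]
    have hnn : n - 1 + 1 = n := by omega
    have harith : n * (t - 1) = (n - 1) * (t - 1) + (t - 1) := by
      calc n * (t - 1) = (n - 1 + 1) * (t - 1) := by rw [hnn]
        _ = (n - 1) * (t - 1) + (t - 1) := by ring
    omega
  · -- Wf properties
    intro h
    obtain ⟨u, hu, hΦu⟩ := (hGmem (Wf h)).mp (hWfmem h)
    exact ⟨hΦu ▸ hall u, hΦu ▸ hΦdim u⟩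
  · -- no common (k-t)-dimensional subspace
    rintro ⟨C, hCd, hCV0, hCW0, hCWf⟩
    apply hjunta2
    refine ⟨C, hCd, fun i => ?_⟩
    by_cases hia : i = a
    · rw [hia]; exact hCV0
    · by_cases hib : i = b
      · rw [hib]; exact hCW0
      · have hmem : Φ i ∈ G := (hGmem _).mpr ⟨i, ⟨hia, hib⟩, rfl⟩
        have h1 : Wf (G.equivFin ⟨Φ i, hmem⟩) = Φ i := by
          rw [hWf]
          simp only [Equiv.symm_apply_apply]
        exact h1 ▸ hCWf (G.equivFin ⟨Φ i, hmem⟩)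
  · -- the set equality
    ext x
    simp only [Set.mem_union, Set.mem_insert_iff, Set.mem_singleton_iff, Set.mem_range]
    constructor
    · rintro ⟨i, rfl⟩
      by_cases hia : i = a
      · exact Or.inl (Or.inl (by rw [hia, ← hMc2 a, hM'0]))
      · by_cases hib : i = b
        · exact Or.inl (Or.inr (by rw [hib, ← hMc2 b, hM'1]))
        · set j : Fin (n - 2) := e.symm ⟨i, (hTTmem i).mpr ⟨hia, hib⟩⟩ with hj
          have h1 : ((e j : Fin n)) = i := by rw [hj, Equiv.apply_symm_apply]
          refine Or.inr ⟨j, ?_⟩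
          rw [hWfc j, hM'j j, h1, hMc2 i]
    · rintro (⟨h | h⟩ | ⟨j, rfl⟩)
      · exact ⟨a, by rw [h, hM'0, ← hMc2 a]⟩
      · exact ⟨b, by rw [h, hM'1, ← hMc2 b]⟩
      · exact ⟨(e j : Fin n), by rw [hWfc j, hM'j j, hMc2]⟩


end AuxLemmas

/-- Lemma 3.2: a non-junta `(k; k-t, k-t+1)`-SPID spanning dimension
`k + (n-1)(t-1) + 1` and containing no `(k-t)`-sunflower of maximal dimension with at
least three petals belongs to Class II, III or IV. -/
theorem statement17 {n k t : ℕ} (ht2 : 2 ≤ t) (htk : t + 1 ≤ k) (hn : 3 ≤ n)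
    (π : Fin n → Submodule F V) (hS : IsSPID k {k - t, k - t + 1} π)
    (hdimV : n * t + (k - t) ≤ finrank F V)
    (hjunta : ¬ IsJunta (k - t) π)
    (hspan : finrank F ↥(⨆ i, π i) = k + (n - 1) * (t - 1) + 1)
    (hnosun : ¬ ∃ p, 3 ≤ p ∧ HasMaxSunflower k (k - t) p (Set.range π)) :
    IsClassII k t n (Set.range π) ∨
    (∃ s, 2 ≤ s ∧ s < n ∧ IsClassIII k t n s (Set.range π)) ∨
    (∃ s, 2 ≤ s ∧ s < n ∧ IsClassIV k t n s (Set.range π)) := by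
  classical
  obtain ⟨hinj, hdim, hint', hatt⟩ := hS
  have hint : ∀ i j, i ≠ j → finrank F ↥(π i ⊓ π j) = k - t ∨
      finrank F ↥(π i ⊓ π j) = k - t + 1 := by
    intro i j hij
    have := hint' i j hij
    simpa [Set.mem_insert_iff, Set.mem_singleton_iff] using this
  obtain ⟨a, b, hab, hblue⟩ := hatt (k - t) (Set.mem_insert _ _)
  by_cases hcase : ∃ u v : Fin n, u ≠ a ∧ u ≠ b ∧ v ≠ a ∧ v ≠ b ∧ u ≠ v ∧
      finrank F ↥(π u ⊓ π v) = k - t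
  · obtain ⟨u0, v0, h1, h2, h3, h4, h5, h6⟩ := hcase
    exact Or.inr (Or.inr (regime2 ht2 htk hn π hinj hdim hint hnosun hspan hjunta
      hab hblue h1 h2 h3 h4 h5 h6))
  · push_neg at hcase
    refine Or.inl (regime1 ht2 htk hn π hinj hdim hint hnosun hspan hjunta hab hblue ?_)
    intro u v hua hub hva hvb huv
    rcases hint u v huv with h | h
    · exact absurd h (hcase u v hua hub hva hvb huv)
    · exact h
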